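/- The function x ↦ φ(x)/Φ(x) (equivalently, x ↦ φ(−x)/(1 − Φ(−x))) is differentiable on ℝ and its derivative lies strictly in the open interval (−1, 0) at every point of ℝ. -/

import Mathlib

open MeasureTheory ProbabilityTheory

/-- Standard normal density. -/
noncomputable def phi (x : ℝ) : ℝ := (Real.sqrt (2 * Real.pi))⁻¹ * Real.exp (-x ^ 2 / 2)

/-- Standard normal CDF. -/
noncomputable def Phi (x : ℝ) : ℝ := ∫ s in Set.Iic x, phi s

/-- Standard normal hazard function (inverse Mills ratio). -/
noncomputable def lam (x : ℝ) : ℝ := phi x / (1 - Phi x)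

/-- Mills-ratio-type function `φ(x)/Φ(x)`. -/
noncomputable def mills (x : ℝ) : ℝ := phi x / Phi x

/-! The derivative of `m = φ/Φ` is `-m (x + m)`, so it suffices that `φ + xΦ > 0` and
`xφΦ + φ² < Φ²`. Each of the quantities `Φ`, `φ + xΦ`, `(1 + x²)Φ + xφ` and
`Φ² - xφΦ - φ²` tends to `0` at `-∞` and has derivative a positive multiple of the previous
one (of `φ` for `Φ`), so all of them are positive. The limits at `-∞` follow from the Gaussian
decay of `φ` and `xφ` together with Mills' inequality `|x| Φ(x) < φ(x)` for `x < 0`, which is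
proved by the same monotonicity argument. -/

open Filter Set Real Topology

theorem lt_of_hasDerivAt_pos_of_tendsto_atBot {f f' : ℝ → ℝ} {a l : ℝ}
    (hf : ∀ x ∈ Iic a, HasDerivAt f (f' x) x) (hf' : ∀ x ∈ Iio a, 0 < f' x)
    (hlim : Tendsto f atBot (𝓝 l)) : l < f a := by
  have hmono : StrictMonoOn f (Iic a) := by
    refine strictMonoOn_of_deriv_pos (convex_Iic a)
      (fun x hx => (hf x hx).continuousAt.continuousWithinAt) fun x hx => ?_
    rw [interior_Iic] at hx
    rw [(hf x (mem_Iic.2 hx.out.le)).deriv]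
    exact hf' x hx
  have hb : a - 1 ∈ Iic a := by simp
  have hl : l ≤ f (a - 1) :=
    le_of_tendsto hlim <| by
      filter_upwards [eventually_le_atBot (a - 1)] with x hx
      exact hmono.monotoneOn (hx.trans hb) hb hx
  exact hl.trans_lt (hmono hb self_mem_Iic (by linarith))

lemma phi_eq_gaussianPDFReal : phi = gaussianPDFReal 0 1 := by
  funext x
  simp [phi, gaussianPDFReal, neg_div]

lemma phi_pos (x : ℝ) : 0 < phi x := by
  unfold phi
  positivity

lemma continuous_phi : Continuous phi := by
  unfold phi
  fun_prop

lemma integrable_phi : Integrable phi :=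
  phi_eq_gaussianPDFReal ▸ integrable_gaussianPDFReal 0 1

lemma hasDerivAt_phi (x : ℝ) : HasDerivAt phi (-x * phi x) x := by
  have hexp : HasDerivAt (fun y : ℝ => -y ^ 2 / 2) (-x) x :=
    ((hasDerivAt_pow 2 x).fun_neg.div_const 2).congr_deriv (by push_cast; ring)
  exact (hexp.exp.const_mul (√(2 * π))⁻¹).congr_deriv (by rw [phi]; ring)

lemma tendsto_abs_rpow_mul_phi_cocompact (s : ℝ) :
    Tendsto (fun x => |x| ^ s * phi x) (cocompact ℝ) (𝓝 0) := by
  have h := (tendsto_rpow_abs_mul_exp_neg_mul_sq_cocompact (by norm_num : (0 : ℝ) < 1 / 2)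
    s).const_mul (√(2 * π))⁻¹
  rw [mul_zero] at h
  convert h using 2 with x
  simp only [phi]
  ring_nf

lemma tendsto_phi_atBot : Tendsto phi atBot (𝓝 0) := by
  simpa using (tendsto_abs_rpow_mul_phi_cocompact 0).mono_left atBot_le_cocompact

lemma tendsto_mul_phi_atBot : Tendsto (fun x => x * phi x) atBot (𝓝 0) := by
  rw [tendsto_zero_iff_norm_tendsto_zero]
  convert (tendsto_abs_rpow_mul_phi_cocompact 1).mono_left atBot_le_cocompact using 2 with x
  simp [abs_of_pos (phi_pos x)]

lemma Phi_eq_cdf (x : ℝ) : Phi x = cdf (gaussianReal 0 1) x := by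
  rw [cdf_eq_real, measureReal_def, gaussianReal_apply_eq_integral _ one_ne_zero,
    ENNReal.toReal_ofReal (integral_nonneg (gaussianPDFReal_nonneg 0 1)), Phi,
    phi_eq_gaussianPDFReal]

lemma tendsto_Phi_atBot : Tendsto Phi atBot (𝓝 0) := by
  simpa only [funext Phi_eq_cdf] using tendsto_cdf_atBot _

lemma hasDerivAt_Phi (x : ℝ) : HasDerivAt Phi (phi x) x := by
  have hPhi : ∀ y, Phi 0 + ∫ t in (0 : ℝ)..y, phi t = Phi y := fun y => by
    rw [← intervalIntegral.integral_Iic_sub_Iic integrable_phi.integrableOn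
      integrable_phi.integrableOn, Phi, Phi, add_sub_cancel]
  have hFTC := intervalIntegral.integral_hasDerivAt_right (a := 0)
    integrable_phi.intervalIntegrable (continuous_phi.stronglyMeasurableAtFilter volume (𝓝 x))
    continuous_phi.continuousAt
  exact (hFTC.const_add (Phi 0)).congr_of_eventuallyEq (.of_forall fun y => (hPhi y).symm)

lemma Phi_pos (x : ℝ) : 0 < Phi x :=
  lt_of_hasDerivAt_pos_of_tendsto_atBot (fun y _ => hasDerivAt_Phi y) (fun y _ => phi_pos y)
    tendsto_Phi_atBot

lemma neg_mul_Phi_lt_phi {x : ℝ} (hx : x < 0) : -x * Phi x < phi x := by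
  have hderiv : ∀ y ∈ Iic x, HasDerivAt (fun z => -(phi z / z) - Phi z) (phi y / y ^ 2) y := by
    intro y hy
    have hy0 : y ≠ 0 := (lt_of_le_of_lt hy hx).ne
    refine (((hasDerivAt_phi y).div (hasDerivAt_id' y) hy0).neg.sub
      (hasDerivAt_Phi y)).congr_deriv ?_
    field_simp
    ring
  have hpos : ∀ y ∈ Iio x, 0 < phi y / y ^ 2 := fun y hy => by
    have : y ≠ 0 := (hy.out.trans hx).ne
    have := phi_pos y
    positivity
  have hlim : Tendsto (fun z => -(phi z / z) - Phi z) atBot (𝓝 0) := by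
    simpa [div_eq_mul_inv] using ((tendsto_phi_atBot.mul tendsto_inv_atBot_zero).neg.sub
      tendsto_Phi_atBot)
  have h := lt_of_hasDerivAt_pos_of_tendsto_atBot hderiv hpos hlim
  have hcancel : -x * -(phi x / x) = phi x := by field_simp [hx.ne]
  nlinarith

lemma tendsto_mul_Phi_atBot : Tendsto (fun x => x * Phi x) atBot (𝓝 0) := by
  refine squeeze_zero_norm' ?_ tendsto_phi_atBot
  filter_upwards [eventually_lt_atBot 0] with x hx
  rw [norm_mul, norm_of_nonpos hx.le, norm_of_nonneg (Phi_pos x).le]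
  exact (neg_mul_Phi_lt_phi hx).le

lemma tendsto_sq_mul_Phi_atBot : Tendsto (fun x => x ^ 2 * Phi x) atBot (𝓝 0) := by
  refine squeeze_zero_norm' ?_ (by simpa using tendsto_mul_phi_atBot.norm)
  filter_upwards [eventually_lt_atBot 0] with x hx
  rw [norm_of_nonneg (by have := Phi_pos x; positivity), abs_of_neg hx,
    abs_of_pos (phi_pos x)]
  nlinarith [neg_mul_Phi_lt_phi hx]

lemma phi_add_mul_Phi_pos (x : ℝ) : 0 < phi x + x * Phi x := by
  have hderiv : ∀ y ∈ Iic x, HasDerivAt (fun z => phi z + z * Phi z) (Phi y) y := fun y _ =>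
    ((hasDerivAt_phi y).fun_add ((hasDerivAt_id' y).fun_mul (hasDerivAt_Phi y))).congr_deriv
      (by ring)
  exact (lt_of_hasDerivAt_pos_of_tendsto_atBot hderiv (fun y _ => Phi_pos y)
    (by simpa using tendsto_phi_atBot.add tendsto_mul_Phi_atBot) :)

lemma one_add_sq_mul_Phi_add_mul_phi_pos (x : ℝ) : 0 < (1 + x ^ 2) * Phi x + x * phi x := by
  have hderiv : ∀ y ∈ Iic x, HasDerivAt (fun z => (1 + z ^ 2) * Phi z + z * phi z)
      (2 * (phi y + y * Phi y)) y := fun y _ =>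
    ((((hasDerivAt_pow 2 y).const_add 1).fun_mul (hasDerivAt_Phi y)).fun_add
      ((hasDerivAt_id' y).fun_mul (hasDerivAt_phi y))).congr_deriv (by push_cast; ring)
  have hlim : Tendsto (fun z => (1 + z ^ 2) * Phi z + z * phi z) atBot (𝓝 0) := by
    simpa [add_mul] using
      (tendsto_Phi_atBot.add tendsto_sq_mul_Phi_atBot).add tendsto_mul_phi_atBot
  exact (lt_of_hasDerivAt_pos_of_tendsto_atBot hderiv
    (fun y _ => by have := phi_add_mul_Phi_pos y; positivity) hlim :)

lemma mul_phi_mul_Phi_add_phi_sq_lt_Phi_sq (x : ℝ) :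
    x * phi x * Phi x + phi x ^ 2 < Phi x ^ 2 := by
  suffices 0 < Phi x ^ 2 - x * phi x * Phi x - phi x ^ 2 by linarith
  have hderiv : ∀ y ∈ Iic x, HasDerivAt (fun z => Phi z ^ 2 - z * phi z * Phi z - phi z ^ 2)
      (phi y * ((1 + y ^ 2) * Phi y + y * phi y)) y := fun y _ =>
    ((((hasDerivAt_Phi y).fun_pow 2).fun_sub (((hasDerivAt_id' y).fun_mul
      (hasDerivAt_phi y)).fun_mul (hasDerivAt_Phi y))).fun_sub
      ((hasDerivAt_phi y).fun_pow 2)).congr_deriv (by push_cast; ring)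
  have hlim : Tendsto (fun z => Phi z ^ 2 - z * phi z * Phi z - phi z ^ 2) atBot (𝓝 0) := by
    simpa [sq] using ((tendsto_Phi_atBot.mul tendsto_Phi_atBot).sub
      (tendsto_mul_phi_atBot.mul tendsto_Phi_atBot)).sub (tendsto_phi_atBot.mul tendsto_phi_atBot)
  exact (lt_of_hasDerivAt_pos_of_tendsto_atBot hderiv
    (fun y _ => mul_pos (phi_pos y) (one_add_sq_mul_Phi_add_mul_phi_pos y)) hlim :)

lemma mills_pos (x : ℝ) : 0 < mills x :=
  div_pos (phi_pos x) (Phi_pos x)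

lemma add_mills_pos (x : ℝ) : 0 < x + mills x := by
  have h : x + mills x = (phi x + x * Phi x) / Phi x := by
    unfold mills
    field_simp [(Phi_pos x).ne']
    ring
  rw [h]
  exact div_pos (phi_add_mul_Phi_pos x) (Phi_pos x)

lemma mills_mul_add_mills_lt_one (x : ℝ) : mills x * (x + mills x) < 1 := by
  have h : mills x * (x + mills x) = (x * phi x * Phi x + phi x ^ 2) / Phi x ^ 2 := by
    unfold mills
    field_simp [(Phi_pos x).ne']
  rw [h, div_lt_one (by have := Phi_pos x; positivity)]
  exact mul_phi_mul_Phi_add_phi_sq_lt_Phi_sq x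

lemma hasDerivAt_mills (x : ℝ) : HasDerivAt mills (-(mills x * (x + mills x))) x := by
  refine ((hasDerivAt_phi x).div (hasDerivAt_Phi x) (Phi_pos x).ne').congr_deriv ?_
  unfold mills
  field_simp [(Phi_pos x).ne']
  ring

/-- `x ↦ φ(x)/Φ(x)` is differentiable with derivative strictly in `(−1, 0)`. -/
theorem stmt_13 :
    ∀ x : ℝ, DifferentiableAt ℝ (fun y => phi y / Phi y) x ∧
      deriv (fun y => phi y / Phi y) x ∈ Set.Ioo (-1 : ℝ) 0 := by
  intro x
  have hd : HasDerivAt (fun y => phi y / Phi y) (-(mills x * (x + mills x))) x :=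
    hasDerivAt_mills x
  refine ⟨hd.differentiableAt, ?_⟩
  rw [hd.deriv]
  have hpos := mul_pos (mills_pos x) (add_mills_pos x)
  have hlt := mills_mul_add_mills_lt_one x
  constructor <;> linarith
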